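/- arXiv:1601.07403 — 2 statements merged into one kernel-verified Lean document; each statement's English description precedes it below -/
import Mathlib

section
/- Let A be a finite idempotent algebra generated by two elements a and b (A = Sg{a,b}) in which every tolerance is either the equality relation or the total relation, and suppose there is no automorphism φ of A with φ(a) = b and φ(b) = a. Then either a and b are connected in the hypergraph H(A), or there is a binary term operation f of A such that f(a,b) = f(b,a) = b or f(a,b) = f(b,a) = a. -/
namespace UA

/-- Terms over a signature `(ι, ar)` with `n` variables. -/
inductive Term (ι : Type) (ar : ι → ℕ) (n : ℕ) : Type where
  | var : Fin n → Term ι ar n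
  | app : (i : ι) → (Fin (ar i) → Term ι ar n) → Term ι ar n

/-- Evaluation of a term in an algebra with operations `ops`. -/
def Term.eval {ι : Type} {ar : ι → ℕ} {A : Type} (ops : ∀ i : ι, (Fin (ar i) → A) → A)
    {n : ℕ} : Term ι ar n → (Fin n → A) → A
  | .var j, x => x j
  | .app i ts, x => ops i fun k => Term.eval ops (ts k) x

variable {ι : Type} {ar : ι → ℕ} {A : Type}

/-- An algebra is idempotent if every basic operation is. -/
def Idempotent (ops : ∀ i : ι, (Fin (ar i) → A) → A) : Prop :=
  ∀ (i : ι) (x : A), ops i (fun _ => x) = x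

/-- A subuniverse: a subset closed under all basic operations. -/
def IsSubuniverse (ops : ∀ i : ι, (Fin (ar i) → A) → A) (S : Set A) : Prop :=
  ∀ (i : ι) (xs : Fin (ar i) → A), (∀ k, xs k ∈ S) → ops i xs ∈ S

/-- The subuniverse generated by `X`. -/
def Sg (ops : ∀ i : ι, (Fin (ar i) → A) → A) (X : Set A) : Set A :=
  ⋂₀ {S | IsSubuniverse ops S ∧ X ⊆ S}

/-- A tolerance: a reflexive symmetric compatible binary relation. -/
def IsTolerance (ops : ∀ i : ι, (Fin (ar i) → A) → A) (τ : A → A → Prop) : Prop :=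
  (∀ x, τ x x) ∧ (∀ x y, τ x y → τ y x) ∧
  ∀ (i : ι) (xs ys : Fin (ar i) → A), (∀ k, τ (xs k) (ys k)) → τ (ops i xs) (ops i ys)

/-- A congruence: a compatible equivalence relation. -/
def IsCongruence (ops : ∀ i : ι, (Fin (ar i) → A) → A) (θ : A → A → Prop) : Prop :=
  Equivalence θ ∧
  ∀ (i : ι) (xs ys : Fin (ar i) → A), (∀ k, θ (xs k) (ys k)) → θ (ops i xs) (ops i ys)

/-- A congruence of the subalgebra with universe `B`, viewed as a partial
equivalence relation on the big algebra whose domain is exactly `B` and which is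
compatible with all operations. -/
def IsCongruenceOn (ops : ∀ i : ι, (Fin (ar i) → A) → A) (B : Set A)
    (θ : A → A → Prop) : Prop :=
  (∀ x y, θ x y → x ∈ B ∧ y ∈ B) ∧
  (∀ x ∈ B, θ x x) ∧
  (∀ x y, θ x y → θ y x) ∧
  (∀ x y z, θ x y → θ y z → θ x z) ∧
  ∀ (i : ι) (xs ys : Fin (ar i) → A), (∀ k, θ (xs k) (ys k)) → θ (ops i xs) (ops i ys)

/-- `f` is a binary term operation of the algebra. -/
def IsTermOp2 (ops : ∀ i : ι, (Fin (ar i) → A) → A) (f : A → A → A) : Prop :=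
  ∃ t : Term ι ar 2, ∀ x y, f x y = t.eval ops ![x, y]

/-- `g` is a ternary term operation of the algebra. -/
def IsTermOp3 (ops : ∀ i : ι, (Fin (ar i) → A) → A) (g : A → A → A → A) : Prop :=
  ∃ t : Term ι ar 3, ∀ x y z, g x y z = t.eval ops ![x, y, z]

/-- Connectivity of `a` and `b` in the hypergraph `H(A)` whose hyperedges are the
nonempty proper subuniverses: a chain of hyperedges with consecutive ones
intersecting, the first containing `a`, the last containing `b`. -/
def HConnected (ops : ∀ i : ι, (Fin (ar i) → A) → A) (a b : A) : Prop :=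
  ∃ L : List (Set A),
    (∀ S ∈ L, IsSubuniverse ops S ∧ S.Nonempty ∧ S ≠ Set.univ) ∧
    L.Chain' (fun S T => (S ∩ T).Nonempty) ∧
    ∃ h : L ≠ [], a ∈ L.head h ∧ b ∈ L.getLast h


/-
Let `R ⊆ A²` be the subalgebra generated by `(a, b)` and `(b, a)`; it is symmetric,
and since `A = Sg {a, b}` every `x` has some `R`-partner. If `(a, a)` or `(b, b)` lies in `R`, the
binary term producing it is the required `f`. Otherwise `R ∘ R` is a tolerance. If it is the
equality, `R` is the graph of an automorphism swapping `a` and `b`, which is excluded. If it is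
total, some `y` is `R`-related to both `a` and `b`; by idempotence the `R`-neighbourhoods of `a`
and of `b` are subuniverses, proper since `a ∉ R[a]` and `b ∉ R[b]`, and they connect `a` and `b`.
-/

def Term.rename {n m : ℕ} (σ : Fin n → Fin m) : Term ι ar n → Term ι ar m
  | .var j => .var (σ j)
  | .app i ts => .app i fun k => (ts k).rename σ

theorem Term.eval_rename (ops : ∀ i : ι, (Fin (ar i) → A) → A) {n m : ℕ}
    (σ : Fin n → Fin m) (t : Term ι ar n) (x : Fin m → A) :
    (t.rename σ).eval ops x = t.eval ops (x ∘ σ) := by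
  induction t with
  | var j => rfl
  | app i ts ih => simp only [Term.rename, Term.eval, ih]

theorem isSubuniverse_range_eval (ops : ∀ i : ι, (Fin (ar i) → A) → A) {n : ℕ}
    (x : Fin n → A) : IsSubuniverse ops (Set.range fun t : Term ι ar n => t.eval ops x) := by
  intro i xs hxs
  choose ts hts using hxs
  exact ⟨.app i ts, by simp only [Term.eval, hts]⟩

theorem Sg_range_subset_range_eval (ops : ∀ i : ι, (Fin (ar i) → A) → A) {n : ℕ}
    (x : Fin n → A) :
    Sg ops (Set.range x) ⊆ Set.range fun t : Term ι ar n => t.eval ops x :=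
  Set.sInter_subset_of_mem
    ⟨isSubuniverse_range_eval ops x, Set.range_subset_iff.2 fun j => ⟨.var j, rfl⟩⟩

def IsCompatible (ops : ∀ i : ι, (Fin (ar i) → A) → A) (R : A → A → Prop) : Prop :=
  ∀ (i : ι) (xs ys : Fin (ar i) → A), (∀ k, R (xs k) (ys k)) → R (ops i xs) (ops i ys)

section Compatible

variable {ops : ∀ i : ι, (Fin (ar i) → A) → A} {R S : A → A → Prop}

theorem IsCompatible.comp (hR : IsCompatible ops R) (hS : IsCompatible ops S) :
    IsCompatible ops (Relation.Comp R S) := by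
  intro i xs zs h
  choose ys hxy hyz using h
  exact ⟨ops i ys, hR i xs ys hxy, hS i ys zs hyz⟩

theorem IsCompatible.isSubuniverse_setOf (hidem : Idempotent ops) (hR : IsCompatible ops R)
    (c : A) : IsSubuniverse ops {z | R c z} := by
  intro i zs hzs
  show R c _
  simpa only [hidem i c] using hR i (fun _ => c) zs hzs

theorem isTolerance_comp_self (hsymm : ∀ {x y}, R x y → R y x) (htotal : ∀ x, ∃ y, R x y)
    (hR : IsCompatible ops R) : IsTolerance ops (Relation.Comp R R) := by
  refine ⟨fun x => ?_, fun x z ⟨y, hxy, hyz⟩ => ⟨y, hsymm hyz, hsymm hxy⟩, hR.comp hR⟩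
  obtain ⟨y, hxy⟩ := htotal x
  exact ⟨y, hxy, hsymm hxy⟩

theorem exists_automorphism_of_comp_self_eq [Finite A] (hsymm : ∀ {x y}, R x y → R y x)
    (htotal : ∀ x, ∃ y, R x y) (hR : IsCompatible ops R)
    (heq : ∀ x y, Relation.Comp R R x y ↔ x = y) :
    ∃ φ : A ≃ A, (∀ (i : ι) (xs : Fin (ar i) → A), φ (ops i xs) = ops i (fun k => φ (xs k))) ∧
      ∀ x y, R x y → φ x = y := by
  choose φ hφ using htotal
  have graph : ∀ x y, R x y → φ x = y := fun x y hxy =>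
    (heq _ _).1 ⟨x, hsymm (hφ x), hxy⟩
  have hinj : Function.Injective φ := fun x x' h =>
    (heq x x').1 ⟨φ x, hφ x, h ▸ hsymm (hφ x')⟩
  refine ⟨Equiv.ofBijective φ (Finite.injective_iff_bijective.1 hinj), fun i xs => ?_, graph⟩
  exact graph _ _ (hR i xs _ fun k => hφ (xs k))

end Compatible

theorem hConnected_of_inter_nonempty {ops : ∀ i : ι, (Fin (ar i) → A) → A} {a b : A}
    {S T : Set A} (hS : IsSubuniverse ops S) (hT : IsSubuniverse ops T)
    (hS_ne : S ≠ Set.univ) (hT_ne : T ≠ Set.univ) (ha : a ∈ S) (hb : b ∈ T)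
    (hST : (S ∩ T).Nonempty) : HConnected ops a b := by
  refine ⟨[S, T], ?_, List.isChain_cons_cons.2 ⟨hST, List.isChain_singleton _⟩, by simp, ha, hb⟩
  simp only [List.mem_cons, List.not_mem_nil, or_false]
  rintro U (rfl | rfl)
  exacts [⟨hS, ⟨a, ha⟩, hS_ne⟩, ⟨hT, ⟨b, hb⟩, hT_ne⟩]

/-- The subuniverse of `A²` generated by `(a, b)` and `(b, a)`, as a relation. -/
def SwapRel (ops : ∀ i : ι, (Fin (ar i) → A) → A) (a b : A) (x y : A) : Prop :=
  ∃ t : Term ι ar 2, t.eval ops ![a, b] = x ∧ t.eval ops ![b, a] = y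

namespace SwapRel

variable {ops : ∀ i : ι, (Fin (ar i) → A) → A} {a b : A}

theorem left_right : SwapRel ops a b a b := ⟨.var 0, rfl, rfl⟩

theorem right_left : SwapRel ops a b b a := ⟨.var 1, rfl, rfl⟩

theorem symm {x y : A} : SwapRel ops a b x y → SwapRel ops a b y x := by
  rintro ⟨t, hx, hy⟩
  have swap_args : ∀ u v : A, (t.rename ![1, 0]).eval ops ![u, v] = t.eval ops ![v, u] := by
    intro u v
    rw [Term.eval_rename]
    congr 1
    funext j
    fin_cases j <;> rfl
  exact ⟨t.rename ![1, 0], (swap_args a b).trans hy, (swap_args b a).trans hx⟩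

theorem isCompatible : IsCompatible ops (SwapRel ops a b) := by
  intro i xs ys h
  choose ts hxs hys using h
  exact ⟨.app i ts, by simp only [Term.eval, hxs], by simp only [Term.eval, hys]⟩

theorem exists_right (hgen : Sg ops ({a, b} : Set A) = Set.univ) (x : A) :
    ∃ y, SwapRel ops a b x y := by
  have hx : x ∈ Sg ops (Set.range ![a, b]) := by
    rw [Matrix.range_cons_cons_empty, hgen]
    trivial
  obtain ⟨t, ht⟩ := Sg_range_subset_range_eval ops _ hx
  exact ⟨_, t, ht, rfl⟩

end SwapRel

theorem stmt_5_general {ι : Type} {ar : ι → ℕ} {A : Type} [Fintype A]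
    (ops : ∀ i : ι, (Fin (ar i) → A) → A)
    (hidem : Idempotent ops)
    (a b : A)
    (hgen : Sg ops ({a, b} : Set A) = Set.univ)
    (htolfree : ∀ τ : A → A → Prop, IsTolerance ops τ →
      (∀ x y, τ x y ↔ x = y) ∨ (∀ x y, τ x y))
    (hnoauto : ¬ ∃ φ : A ≃ A,
      (∀ (i : ι) (xs : Fin (ar i) → A), φ (ops i xs) = ops i (fun k => φ (xs k))) ∧
      φ a = b ∧ φ b = a) :
    HConnected ops a b ∨
      ∃ f : A → A → A, IsTermOp2 ops f ∧
        ((f a b = b ∧ f b a = b) ∨ (f a b = a ∧ f b a = a)) := by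
  by_cases haa : SwapRel ops a b a a
  · obtain ⟨t, h1, h2⟩ := haa
    exact .inr ⟨fun x y => t.eval ops ![x, y], ⟨t, fun _ _ => rfl⟩, .inr ⟨h1, h2⟩⟩
  by_cases hbb : SwapRel ops a b b b
  · obtain ⟨t, h1, h2⟩ := hbb
    exact .inr ⟨fun x y => t.eval ops ![x, y], ⟨t, fun _ _ => rfl⟩, .inl ⟨h1, h2⟩⟩
  have htotal := SwapRel.exists_right hgen
  rcases htolfree _ (isTolerance_comp_self SwapRel.symm htotal SwapRel.isCompatible) with
    heq | hall
  · obtain ⟨φ, hφ, graph⟩ :=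
      exists_automorphism_of_comp_self_eq SwapRel.symm htotal SwapRel.isCompatible heq
    exact absurd ⟨φ, hφ, graph _ _ SwapRel.left_right, graph _ _ SwapRel.right_left⟩ hnoauto
  · obtain ⟨y, hay, hyb⟩ := hall a b
    have hsub := (SwapRel.isCompatible (a := a) (b := b)).isSubuniverse_setOf hidem
    refine .inl (hConnected_of_inter_nonempty (hsub b) (hsub a) ?_ ?_ SwapRel.right_left
      SwapRel.left_right ⟨y, SwapRel.symm hyb, hay⟩)
    exacts [fun h => hbb (Set.eq_univ_iff_forall.1 h b),
      fun h => haa (Set.eq_univ_iff_forall.1 h a)]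

/-- a tolerance-free finite idempotent algebra generated by `a, b`
with no automorphism swapping `a` and `b`: either `a, b` are connected in `H(A)`,
or there is a binary term operation `f` with `f(a,b) = f(b,a) ∈ {a, b}`. -/
theorem stmt_5 {ι : Type} {ar : ι → ℕ} {A : Type} [Fintype A] [Nonempty A]
    (ops : ∀ i : ι, (Fin (ar i) → A) → A)
    (hidem : Idempotent ops)
    (a b : A)
    (hgen : Sg ops ({a, b} : Set A) = Set.univ)
    (htolfree : ∀ τ : A → A → Prop, IsTolerance ops τ →
      (∀ x y, τ x y ↔ x = y) ∨ (∀ x y, τ x y))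
    (hnoauto : ¬ ∃ φ : A ≃ A,
      (∀ (i : ι) (xs : Fin (ar i) → A), φ (ops i xs) = ops i (fun k => φ (xs k))) ∧
      φ a = b ∧ φ b = a) :
    HConnected ops a b ∨
      ∃ f : A → A → A, IsTermOp2 ops f ∧
        ((f a b = b ∧ f b a = b) ∨ (f a b = a ∧ f b a = a)) :=
  stmt_5_general ops hidem a b hgen htolfree hnoauto

end UA
end

section
/- Let A be a finite idempotent algebra and g a ternary term operation of A. Then there exists a ternary term operation g′ of A such that g′(x, g′(x,y,y), g′(x,y,y)) = g′(x,y,y) for all x,y ∈ A, and such that for all a,b ∈ A and every congruence θ of Sg{a,b}: if for all u,v,w ∈ {a,b} the element g(u,v,w) is θ-congruent to the majority element of (u,v,w) (the element of {a,b} occurring at least twice among u,v,w), then the same holds for g′. -/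
namespace UA

variable {ι : Type} {ar : ι → ℕ} {A : Type}

/-- The majority element of a triple from a two-element set. -/
def maj {A : Type} (u v w : A) [DecidableEq A] : A :=
  if u = v ∨ u = w then u else v

/-
Let `f_x(y) = g(x, y, y)`. Nesting `g` in its last two arguments,
`g_{n+1}(x, y, z) = g(x, g_n(x, y, z), g_n(x, y, z))` (`nestOp`), gives term operations with
`g_n(x, y, y) = f_x^{n+1}(y)`. In the finite monoid `A → A` some power `N ≥ 1` is idempotent
uniformly in `f`, so `g' = g_{N-1}` satisfies
`g'(x, g'(x, y, y), g'(x, y, y)) = f_x^{2N}(y) = f_x^N(y) = g'(x, y, y)`.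
Majority modulo `θ` passes from `g_n` to `g_{n+1}`: if `g_n(u, v, w) θ m` with `m = maj(u, v, w)`,
then `g_{n+1}(u, v, w) θ g(u, m, m) θ maj(u, m, m) = m`.
-/

section FiniteMonoid

variable {M : Type*} [Monoid M]

theorem pow_add_mul_eq_pow_of_pow_add_eq {x : M} {i p : ℕ} (h : x ^ (i + p) = x ^ i)
    {n : ℕ} (hn : i ≤ n) (k : ℕ) : x ^ (n + k * p) = x ^ n := by
  have hstep : ∀ m, i ≤ m → x ^ (m + p) = x ^ m := fun m hm => by
    obtain ⟨d, rfl⟩ := Nat.exists_eq_add_of_le hm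
    rw [add_right_comm, pow_add, h, ← pow_add]
  induction k with
  | zero => simp
  | succ k ih => rw [add_mul, one_mul, ← add_assoc, hstep _ (by omega), ih]

theorem exists_pow_isIdempotentElem [Finite M] (x : M) :
    ∃ n ≠ 0, IsIdempotentElem (x ^ n) := by
  obtain ⟨i, j, hij, hx⟩ := Set.finite_univ.exists_lt_map_eq_of_forall_mem
    (f := fun n : ℕ => x ^ n) fun _ => Set.mem_univ _
  obtain ⟨p, rfl⟩ := Nat.exists_eq_add_of_lt hij
  refine ⟨(i + 1) * (p + 1), by positivity, ?_⟩
  rw [IsIdempotentElem, ← pow_add]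
  exact pow_add_mul_eq_pow_of_pow_add_eq (by rw [← add_assoc]; exact hx.symm)
    (by nlinarith) (i + 1)

theorem exists_forall_pow_isIdempotentElem [Finite M] :
    ∃ N ≠ 0, ∀ x : M, IsIdempotentElem (x ^ N) := by
  have := Fintype.ofFinite M
  choose n hn0 hn using exists_pow_isIdempotentElem (M := M)
  refine ⟨∏ x, n x, Finset.prod_ne_zero_iff.mpr fun x _ => hn0 x, fun x => ?_⟩
  obtain ⟨k, hk⟩ := Finset.dvd_prod_of_mem n (Finset.mem_univ x)
  have hk0 : k ≠ 0 := by
    rintro rfl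
    exact Finset.prod_ne_zero_iff.mpr (fun x _ => hn0 x) (by simpa using hk)
  rw [hk, pow_mul, (hn x).pow_eq hk0]
  exact hn x

end FiniteMonoid

theorem maj_self_self [DecidableEq A] (u m : A) : maj u m m = m := by
  by_cases h : u = m <;> simp [maj, h]

theorem maj_mem [DecidableEq A] {S : Set A} {u v w : A} (hu : u ∈ S) (hv : v ∈ S) :
    maj u v w ∈ S := by
  unfold maj
  split_ifs
  exacts [hu, hv]

theorem subset_Sg (ops : ∀ i : ι, (Fin (ar i) → A) → A) (X : Set A) : X ⊆ Sg ops X :=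
  fun _ hx _ hS => hS.2 hx

def Term.subst {n m : ℕ} : Term ι ar n → (Fin n → Term ι ar m) → Term ι ar m
  | .var j, σ => σ j
  | .app i ts, σ => .app i fun k => (ts k).subst σ

theorem Term.eval_subst (ops : ∀ i : ι, (Fin (ar i) → A) → A) {n m : ℕ}
    (t : Term ι ar n) (σ : Fin n → Term ι ar m) (x : Fin m → A) :
    (t.subst σ).eval ops x = t.eval ops fun j => (σ j).eval ops x := by
  induction t with
  | var j => rfl
  | app i ts ih => simp only [Term.subst, Term.eval, ih]

theorem IsCongruenceOn.eval {ops : ∀ i : ι, (Fin (ar i) → A) → A} {B : Set A}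
    {θ : A → A → Prop} (hθ : IsCongruenceOn ops B θ) {n : ℕ} (t : Term ι ar n)
    {xs ys : Fin n → A} (h : ∀ k, θ (xs k) (ys k)) : θ (t.eval ops xs) (t.eval ops ys) := by
  induction t with
  | var j => exact h j
  | app i ts ih => exact hθ.2.2.2.2 i _ _ ih

theorem IsCongruenceOn.termOp3 {ops : ∀ i : ι, (Fin (ar i) → A) → A} {B : Set A}
    {θ : A → A → Prop} (hθ : IsCongruenceOn ops B θ) {g : A → A → A → A}
    (hg : IsTermOp3 ops g) {x x' y y' z z' : A} (hx : θ x x') (hy : θ y y') (hz : θ z z') :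
    θ (g x y z) (g x' y' z') := by
  obtain ⟨t, ht⟩ := hg
  rw [ht, ht]
  exact hθ.eval t fun k => by fin_cases k <;> assumption

def nestOp (g : A → A → A → A) : ℕ → A → A → A → A
  | 0 => g
  | n + 1 => fun x y z => g x (nestOp g n x y z) (nestOp g n x y z)

theorem nestOp_diag (g : A → A → A → A) (n : ℕ) (x y : A) :
    nestOp g n x y y = (fun u => g x u u)^[n + 1] y := by
  induction n with
  | zero => rfl
  | succ n ih => rw [Function.iterate_succ_apply', ← ih]; rfl

theorem IsTermOp3.nestOp {ops : ∀ i : ι, (Fin (ar i) → A) → A} {g : A → A → A → A}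
    (hg : IsTermOp3 ops g) (n : ℕ) : IsTermOp3 ops (nestOp g n) := by
  induction n with
  | zero => exact hg
  | succ n ih =>
    obtain ⟨t, ht⟩ := hg
    obtain ⟨s, hs⟩ := ih
    refine ⟨t.subst ![.var 0, s, s], fun x y z => ?_⟩
    rw [Term.eval_subst]
    show g x (UA.nestOp g n x y z) (UA.nestOp g n x y z) = _
    rw [ht, hs]
    congr 1
    funext j
    fin_cases j <;> rfl

def IsMajorityMod [DecidableEq A] (θ : A → A → Prop) (S : Set A) (g : A → A → A → A) :
    Prop :=
  ∀ u v w : A, u ∈ S → v ∈ S → w ∈ S → θ (g u v w) (maj u v w)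

theorem IsCongruenceOn.isMajorityMod_nestOp [DecidableEq A]
    {ops : ∀ i : ι, (Fin (ar i) → A) → A} {B S : Set A} {θ : A → A → Prop}
    (hθ : IsCongruenceOn ops B θ) (hSB : S ⊆ B)
    {g : A → A → A → A} (hg : IsTermOp3 ops g) (hmaj : IsMajorityMod θ S g) (n : ℕ) :
    IsMajorityMod θ S (nestOp g n) := by
  induction n with
  | zero => exact hmaj
  | succ n ih =>
    intro u v w hu hv hw
    have hm : maj u v w ∈ S := maj_mem hu hv
    have hu_refl : θ u u := hθ.2.1 u (hSB hu)
    have hnest := ih u v w hu hv hw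
    have hbase := hmaj u _ _ hu hm hm
    rw [maj_self_self] at hbase
    exact hθ.2.2.2.1 _ _ _ (hθ.termOp3 hg hu_refl hnest hnest) hbase

theorem stmt_7_general {ι : Type} {ar : ι → ℕ} {A : Type} [Fintype A]
    [DecidableEq A]
    (ops : ∀ i : ι, (Fin (ar i) → A) → A)
    (g : A → A → A → A) (hg : IsTermOp3 ops g) :
    ∃ g' : A → A → A → A, IsTermOp3 ops g' ∧
      (∀ x y : A, g' x (g' x y y) (g' x y y) = g' x y y) ∧
      ∀ (a b : A) (θ : A → A → Prop),
        IsCongruenceOn ops (Sg ops ({a, b} : Set A)) θ →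
        (∀ u v w : A, u ∈ ({a, b} : Set A) → v ∈ ({a, b} : Set A) →
          w ∈ ({a, b} : Set A) → θ (g u v w) (maj u v w)) →
        (∀ u v w : A, u ∈ ({a, b} : Set A) → v ∈ ({a, b} : Set A) →
          w ∈ ({a, b} : Set A) → θ (g' u v w) (maj u v w)) := by
  have : Finite (Function.End A) := inferInstanceAs (Finite (A → A))
  obtain ⟨N, hN0, hidem⟩ := exists_forall_pow_isIdempotentElem (M := Function.End A)
  obtain ⟨n, rfl⟩ := Nat.exists_eq_add_one_of_ne_zero hN0
  refine ⟨nestOp g n, hg.nestOp n, fun x y => ?_, fun a b θ hθ hmaj =>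
    hθ.isMajorityMod_nestOp (subset_Sg ops _) hg hmaj n⟩
  rw [nestOp_diag, nestOp_diag]
  exact congrFun (hidem fun u => g x u u) y

/-- any ternary term operation can be improved to one satisfying
`g'(x, g'(x,y,y), g'(x,y,y)) = g'(x,y,y)` while keeping its majority behaviour
modulo any congruence of any 2-generated subalgebra. -/
theorem stmt_7 {ι : Type} {ar : ι → ℕ} {A : Type} [Fintype A] [Nonempty A]
    [DecidableEq A]
    (ops : ∀ i : ι, (Fin (ar i) → A) → A)
    (hidem : Idempotent ops)
    (g : A → A → A → A) (hg : IsTermOp3 ops g) :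
    ∃ g' : A → A → A → A, IsTermOp3 ops g' ∧
      (∀ x y : A, g' x (g' x y y) (g' x y y) = g' x y y) ∧
      ∀ (a b : A) (θ : A → A → Prop),
        IsCongruenceOn ops (Sg ops ({a, b} : Set A)) θ →
        (∀ u v w : A, u ∈ ({a, b} : Set A) → v ∈ ({a, b} : Set A) →
          w ∈ ({a, b} : Set A) → θ (g u v w) (maj u v w)) →
        (∀ u v w : A, u ∈ ({a, b} : Set A) → v ∈ ({a, b} : Set A) →
          w ∈ ({a, b} : Set A) → θ (g' u v w) (maj u v w)) :=
  stmt_7_general ops g hg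

end UA
end
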